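/- (Saturation Lemma) Let Γ be a Λ-consistent set of formulas in language L. Then there exists a Λ-consistent set Γ₊ of formulas in the language L⁺ (L enlarged with countably many fresh variables) with Γ ⊆ Γ₊ such that Γ₊ has the ∀-property: for every formula φ and every variable x, there is a variable y with (φ(y/x) → ∀x φ) ∈ Γ₊. -/

import Mathlib

/-- The two sorts: agents and objects. -/
inductive Srt : Type | agt | obj
deriving DecidableEq

/-- Variables, tagged with a sort. -/
abbrev Var : Type := Srt × ℕ

/-- Terms: variables and constants, each tagged with a sort. -/
inductive Tm : Type
  | var : Var → Tm
  | con : Var → Tm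
deriving DecidableEq

/-- The sort of a term. -/
def Tm.srt : Tm → Srt
  | .var x => x.1
  | .con c => c.1

/-- Formulas of the two-sorted term-modal language. -/
inductive Fml : Type
  | rel : ℕ → List Tm → Fml
  | eq : Tm → Tm → Fml
  | neg : Fml → Fml
  | imp : Fml → Fml → Fml
  | all : Var → Fml → Fml
  | K : Tm → Fml → Fml
deriving DecidableEq

/-- Conjunction, defined from negation and implication. -/
def Fml.and (φ ψ : Fml) : Fml := Fml.neg (φ.imp ψ.neg)

/-- Substitute variable y for variable x in a term. -/
def Tm.substV (x y : Var) : Tm → Tm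
  | .var z => if z = x then .var y else .var z
  | .con c => .con c

/-- Substitute variable y for all free occurrences of x in a formula. -/
def Fml.substV (x y : Var) : Fml → Fml
  | .rel p ts => .rel p (ts.map (Tm.substV x y))
  | .eq t u => .eq (t.substV x y) (u.substV x y)
  | .neg φ => .neg (φ.substV x y)
  | .imp φ ψ => .imp (φ.substV x y) (ψ.substV x y)
  | .all z φ => if z = x then .all z φ else .all z (φ.substV x y)
  | .K t φ => .K (t.substV x y) (φ.substV x y)

/-- x occurs free in a formula. -/
def Fml.free (x : Var) : Fml → Prop
  | .rel _ ts => ∃ t ∈ ts, t = Tm.var x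
  | .eq t u => t = Tm.var x ∨ u = Tm.var x
  | .neg φ => φ.free x
  | .imp φ ψ => φ.free x ∨ ψ.free x
  | .all z φ => z ≠ x ∧ φ.free x
  | .K t φ => t = Tm.var x ∨ φ.free x

/-- y is free for x in φ (substituting y for free x causes no capture). -/
def freeFor (y x : Var) : Fml → Prop
  | .rel _ _ => True
  | .eq _ _ => True
  | .neg φ => freeFor y x φ
  | .imp φ ψ => freeFor y x φ ∧ freeFor y x ψ
  | .all z φ => z = x ∨ ((z = y → ¬ φ.free x) ∧ freeFor y x φ)
  | .K _ φ => freeFor y x φ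

/-- An assignment of truth values to formulas that is boolean-homomorphic on
negation and implication. -/
def BoolHom (b : Fml → Bool) : Prop :=
  (∀ φ, b (Fml.neg φ) = !b φ) ∧ (∀ φ ψ, b (Fml.imp φ ψ) = (!b φ || b ψ))

/-- Substitution instances of propositional tautologies: formulas true under
every assignment that is boolean-homomorphic on ¬ and →. -/
def Taut (φ : Fml) : Prop := ∀ b : Fml → Bool, BoolHom b → b φ = true

/-- Conjunction of a finite list of formulas (empty list gives a tautology). -/
def conjF : List Fml → Fml
  | [] => Fml.imp (Fml.rel 0 []) (Fml.rel 0 [])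
  | φ :: l => φ.and (conjF l)

/-- Γ ⊢_Λ φ : some finite conjunction of members of Γ provably implies φ in Λ. -/
def Deduces (Λ Γ : Set Fml) (φ : Fml) : Prop :=
  ∃ l : List Fml, (∀ ψ ∈ l, ψ ∈ Γ) ∧ Fml.imp (conjF l) φ ∈ Λ

/-- Γ is Λ-consistent: no contradiction φ ∧ ¬φ is deducible from Γ. -/
def Consistent (Λ Γ : Set Fml) : Prop := ¬ ∃ φ : Fml, Deduces Λ Γ (φ.and φ.neg)

/-- Maximally Λ-consistent set. -/
def MaxConsistent (Λ Γ : Set Fml) : Prop :=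
  Consistent Λ Γ ∧ ∀ Δ : Set Fml, Γ ⊂ Δ → ¬ Consistent Λ Δ

/-- x occurs (free or bound) in a formula. -/
def Fml.occurs (x : Var) : Fml → Prop
  | .rel _ ts => ∃ t ∈ ts, t = Tm.var x
  | .eq t u => t = Tm.var x ∨ u = Tm.var x
  | .neg φ => φ.occurs x
  | .imp φ ψ => φ.occurs x ∨ ψ.occurs x
  | .all z φ => z = x ∨ φ.occurs x
  | .K t φ => t = Tm.var x ∨ φ.occurs x

/-- The variables of the original language L: the even-indexed variables of
each sort.  The full language L⁺ adds the (infinitely many, of each sort)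
odd-indexed fresh variables. -/
def OldVar : Set Var := {x : Var | x.2 % 2 = 0}

/-- φ is a formula of the language with variables drawn from S. -/
def InLang (S : Set Var) (φ : Fml) : Prop := ∀ x : Var, φ.occurs x → x ∈ S

/-- Γ₊ has the ∀-property: for every formula φ and variable x there is a
variable y (of the same sort) with (φ(y/x) → ∀x φ) ∈ Γ₊. -/
def ForallProp (Γ : Set Fml) : Prop :=
  ∀ (φ : Fml) (x : Var), ∃ y : Var, y.1 = x.1 ∧
    Fml.imp (φ.substV x y) (Fml.all x φ) ∈ Γ

/-!
Enumerate the pairs `(φ, x)` as `f 0, f 1, …` and add at stage `n` the Henkin axiom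
`φ(y/x) → ∀x φ` for `(φ, x) = f n`, with `y` an odd-indexed variable occurring nowhere so far.
Each step preserves consistency: if `Δ` refuted the axiom it would derive `φ(y/x)` and `¬∀x φ`;
since `y` is not free in `Δ`, Gen gives `∀y φ(y/x)`, which the alphabetic variant turns into
`∀x φ`. Consistency is finitary, so the union of the chain is consistent.
-/

instance : Encodable Srt :=
  Encodable.ofLeftInverse (fun | .agt => false | .obj => true) (fun b => cond b .obj .agt)
    (by rintro (_ | _) <;> rfl)

instance : Encodable Tm :=
  Encodable.ofLeftInverse (fun | .var x => (Sum.inl x : Var ⊕ Var) | .con c => .inr c)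
    (Sum.elim .var .con) (by rintro (_ | _) <;> rfl)

def Fml.code : Fml → ℕ
  | .rel n ts => Nat.pair 0 (Nat.pair n (Encodable.encode ts))
  | .eq t u => Nat.pair 1 (Nat.pair (Encodable.encode t) (Encodable.encode u))
  | .neg φ => Nat.pair 2 φ.code
  | .imp φ ψ => Nat.pair 3 (Nat.pair φ.code ψ.code)
  | .all z φ => Nat.pair 4 (Nat.pair (Encodable.encode z) φ.code)
  | .K t φ => Nat.pair 5 (Nat.pair (Encodable.encode t) φ.code)

theorem Fml.code_injective : Function.Injective Fml.code := by
  intro φ ψ h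
  induction φ generalizing ψ <;> cases ψ <;>
    simp [Fml.code, Nat.pair_eq_pair, Encodable.encode_inj] at h ⊢ <;> aesop

instance : Countable Fml := Fml.code_injective.countable

instance : Nonempty Fml := ⟨.rel 0 []⟩

instance : Nonempty Srt := ⟨.agt⟩

def Tm.varIdx : Tm → ℕ
  | .var x => x.2
  | .con _ => 0

def Fml.varBound : Fml → ℕ
  | .rel _ ts => (ts.map Tm.varIdx).sum
  | .eq t u => max t.varIdx u.varIdx
  | .neg φ => φ.varBound
  | .imp φ ψ => max φ.varBound ψ.varBound
  | .all z φ => max z.2 φ.varBound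
  | .K t φ => max t.varIdx φ.varBound

theorem Fml.le_varBound_of_occurs {v : Var} {φ : Fml} (h : φ.occurs v) : v.2 ≤ φ.varBound := by
  induction φ with
  | rel n ts =>
    obtain ⟨t, ht, rfl⟩ := h
    exact List.le_sum_of_mem (List.mem_map_of_mem (f := Tm.varIdx) ht)
  | eq t u => rcases h with rfl | rfl <;> simp [Fml.varBound, Tm.varIdx]
  | neg φ ih => exact ih h
  | imp φ ψ ih₁ ih₂ =>
    rcases h with h | h
    · exact le_max_of_le_left (ih₁ h)
    · exact le_max_of_le_right (ih₂ h)
  | all z φ ih =>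
    rcases h with rfl | h
    · exact le_max_left _ _
    · exact le_max_of_le_right (ih h)
  | K t φ ih =>
    rcases h with rfl | h
    · exact le_max_left _ _
    · exact le_max_of_le_right (ih h)

theorem Tm.eq_var_or_eq_of_substV_eq_var {x y v : Var} {t : Tm}
    (h : t.substV x y = .var v) : t = .var v ∨ v = y := by
  cases t with
  | var z => by_cases hz : z = x <;> simp_all [Tm.substV, eq_comm]
  | con c => simp [Tm.substV] at h

theorem Fml.occurs_or_eq_of_occurs_substV {x y v : Var} {φ : Fml}
    (h : (φ.substV x y).occurs v) : φ.occurs v ∨ v = y := by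
  induction φ with
  | rel n ts =>
    obtain ⟨t, ht, heq⟩ := h
    obtain ⟨t₀, ht₀, rfl⟩ := List.mem_map.mp ht
    exact (Tm.eq_var_or_eq_of_substV_eq_var heq).imp_left fun h => ⟨t₀, ht₀, h⟩
  | eq t u =>
    rcases h with h | h <;> rcases Tm.eq_var_or_eq_of_substV_eq_var h with h | h <;>
      simp [Fml.occurs, h]
  | neg φ ih => exact ih h
  | imp φ ψ ih₁ ih₂ => rcases h with h | h <;> simp only [Fml.occurs] <;> tauto
  | all z φ ih =>
    by_cases hz : z = x
    · rw [Fml.substV, if_pos hz] at h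
      exact Or.inl h
    · rw [Fml.substV, if_neg hz] at h
      simp only [Fml.occurs] at h ⊢
      tauto
  | K t φ ih =>
    rcases h with h | h
    · rcases Tm.eq_var_or_eq_of_substV_eq_var h with h | h <;> simp [Fml.occurs, h]
    · simp only [Fml.occurs]; tauto

theorem Fml.occurs_of_free {v : Var} {φ : Fml} (h : φ.free v) : φ.occurs v := by
  induction φ with
  | rel | eq => exact h
  | neg φ ih => exact ih h
  | imp φ ψ ih₁ ih₂ => exact h.imp ih₁ ih₂
  | all z φ ih => exact Or.inr (ih h.2)
  | K t φ ih => exact h.imp_right ih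

theorem exists_mem_occurs_of_occurs_conjF {v : Var} :
    ∀ {l : List Fml}, (conjF l).occurs v → ∃ ψ ∈ l, ψ.occurs v
  | [], h => by rcases h with ⟨t, ht, _⟩ | ⟨t, ht, _⟩ <;> simp at ht
  | φ :: l, h => by
    rcases h with h | h
    · exact ⟨φ, List.mem_cons_self, h⟩
    · obtain ⟨ψ, hψ, hocc⟩ := exists_mem_occurs_of_occurs_conjF h
      exact ⟨ψ, List.mem_cons_of_mem _ hψ, hocc⟩

theorem BoolHom.and {b : Fml → Bool} (hb : BoolHom b) (φ ψ : Fml) :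
    b (φ.and ψ) = (b φ && b ψ) := by
  simp only [Fml.and, hb.1, hb.2]
  cases b φ <;> cases b ψ <;> rfl

theorem BoolHom.conjF_eq_true {b : Fml → Bool} (hb : BoolHom b) :
    ∀ l : List Fml, b (conjF l) = true ↔ ∀ ψ ∈ l, b ψ = true
  | [] => by simp [conjF, hb.2]
  | φ :: l => by simp [conjF, hb.and, hb.conjF_eq_true l]

structure PropClosed (Λ : Set Fml) : Prop where
  taut : ∀ φ, Taut φ → φ ∈ Λ
  mp : ∀ φ ψ : Fml, Fml.imp φ ψ ∈ Λ → φ ∈ Λ → ψ ∈ Λ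

namespace PropClosed

variable {Λ : Set Fml} {P φ ψ χ : Fml}

theorem mem_of_taut₂ (hΛ : PropClosed Λ) (h : Taut (φ.imp (ψ.imp χ))) (hφ : φ ∈ Λ)
    (hψ : ψ ∈ Λ) : χ ∈ Λ :=
  hΛ.mp _ _ (hΛ.mp _ _ (hΛ.taut _ h) hφ) hψ

theorem imp_trans (hΛ : PropClosed Λ) (hφ : P.imp φ ∈ Λ) (hψ : φ.imp ψ ∈ Λ) : P.imp ψ ∈ Λ :=
  hΛ.mem_of_taut₂ (fun b hb => by simp only [hb.2]; cases b P <;> cases b φ <;> cases b ψ <;> rfl)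
    hφ hψ

theorem imp_of_taut (hΛ : PropClosed Λ) (hφ : P.imp φ ∈ Λ) (h : Taut (φ.imp ψ)) :
    P.imp ψ ∈ Λ :=
  hΛ.imp_trans hφ (hΛ.taut _ h)

theorem imp_and (hΛ : PropClosed Λ) (hφ : P.imp φ ∈ Λ) (hψ : P.imp ψ ∈ Λ) :
    P.imp (φ.and ψ) ∈ Λ :=
  hΛ.mem_of_taut₂
    (fun b hb => by simp only [hb.2, hb.and]; cases b P <;> cases b φ <;> cases b ψ <;> rfl)
    hφ hψ

end PropClosed

theorem deduces_neg_of_not_consistent_insert {Λ Δ : Set Fml} {χ : Fml} (hΛ : PropClosed Λ)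
    (h : ¬Consistent Λ (insert χ Δ)) : Deduces Λ Δ χ.neg := by
  obtain ⟨θ, l, hl, hθ⟩ := not_not.mp h
  set l' := l.filter (· ≠ χ)
  have hl' : ∀ ψ ∈ l, ψ = χ ∨ ψ ∈ l' := by
    intro ψ hψ
    by_cases hψχ : ψ = χ <;> simp [l', hψχ, hψ]
  refine ⟨l', fun ψ hψ => ?_, hΛ.mp _ _ (hΛ.taut _ fun b hb => ?_) hθ⟩
  · obtain ⟨hψl, hψχ⟩ := List.mem_filter.mp hψ
    exact (hl ψ hψl).resolve_left (by simpa using hψχ)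
  · have hconj (h₁ : b (conjF l') = true) (h₂ : b χ = true) : b (conjF l) = true :=
      (hb.conjF_eq_true l).mpr fun ψ hψ =>
        (hl' ψ hψ).elim (· ▸ h₂) ((hb.conjF_eq_true l').mp h₁ ψ)
    simp only [hb.1, hb.2, hb.and]
    cases h₁ : b (conjF l') <;> cases h₂ : b χ <;> simp [hconj, h₁, h₂]

def henkinAxiom (φ : Fml) (x y : Var) : Fml := (φ.substV x y).imp (.all x φ)

theorem Consistent.insert_henkinAxiom {Λ Δ : Set Fml} (hΛ : PropClosed Λ)
    (gen : ∀ (φ ψ : Fml) (x : Var), ¬ φ.free x →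
      Fml.imp φ ψ ∈ Λ → Fml.imp φ (Fml.all x ψ) ∈ Λ)
    (alpha : ∀ (φ : Fml) (x y : Var), y.1 = x.1 → ¬ φ.occurs y →
      Fml.imp (Fml.all y (φ.substV x y)) (Fml.all x φ) ∈ Λ)
    (hΔ : Consistent Λ Δ) {φ : Fml} {x y : Var} (hyx : y.1 = x.1)
    (hyΔ : ∀ ψ ∈ Δ, ¬ψ.occurs y) (hyφ : ¬φ.occurs y) :
    Consistent Λ (insert (henkinAxiom φ x y) Δ) := by
  intro hincons
  obtain ⟨l, hl, hneg⟩ := deduces_neg_of_not_consistent_insert hΛ (not_not_intro hincons)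
  have hinst : (conjF l).imp (φ.substV x y) ∈ Λ := hΛ.imp_of_taut hneg fun b hb => by
    simp only [henkinAxiom, hb.1, hb.2]; cases b (φ.substV x y) <;> cases b (.all x φ) <;> rfl
  have hnall : (conjF l).imp (Fml.all x φ).neg ∈ Λ := hΛ.imp_of_taut hneg fun b hb => by
    simp only [henkinAxiom, hb.1, hb.2]; cases b (φ.substV x y) <;> cases b (.all x φ) <;> rfl
  have hy : ¬(conjF l).free y := fun hfree => by
    obtain ⟨ψ, hψ, hocc⟩ := exists_mem_occurs_of_occurs_conjF (Fml.occurs_of_free hfree)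
    exact hyΔ ψ (hl ψ hψ) hocc
  have hall : (conjF l).imp (Fml.all x φ) ∈ Λ :=
    hΛ.imp_trans (gen _ _ _ hy hinst) (alpha φ x y hyx hyφ)
  exact hΔ ⟨_, l, hl, hΛ.imp_and hall hnall⟩

theorem Consistent.iUnion {Λ : Set Fml} {ι : Type*} [Nonempty ι] {Δ : ι → Set Fml}
    (hdir : Directed (· ⊆ ·) Δ) (h : ∀ i, Consistent Λ (Δ i)) : Consistent Λ (⋃ i, Δ i) := by
  rintro ⟨θ, l, hl, hθ⟩
  obtain ⟨i, hi⟩ := hdir.exists_mem_subset_of_finset_subset_biUnion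
    (s := l.toFinset) fun ψ hψ => hl ψ (List.mem_toFinset.mp hψ)
  exact h i ⟨θ, l, fun ψ hψ => hi (List.mem_toFinset.mpr hψ), hθ⟩

section HenkinChain

variable (f : ℕ → Fml × Var)

/-- Strictly increasing and above the variable indices of `f m` for `m ≤ n`: this makes the
witnesses pairwise distinct and fresh for the earlier stages. -/
def witnessBound (n : ℕ) : ℕ :=
  ∑ m ∈ Finset.range (n + 1), (max (f m).1.varBound (f m).2.2 + 1)

theorem witnessBound_strictMono : StrictMono (witnessBound f) :=
  strictMono_nat_of_lt_succ fun n => by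
    unfold witnessBound
    rw [Finset.sum_range_succ _ (n + 1)]
    omega

theorem max_lt_witnessBound (n : ℕ) : max (f n).1.varBound (f n).2.2 < witnessBound f n :=
  Finset.single_le_sum (f := fun m => max (f m).1.varBound (f m).2.2 + 1)
    (fun _ _ => Nat.zero_le _) (Finset.self_mem_range_succ n)

/-- Odd-indexed, so absent from `L`-formulas. -/
def witness (n : ℕ) : Var := ((f n).2.1, 2 * witnessBound f n + 1)

def henkinChain (Γ : Set Fml) : ℕ → Set Fml
  | 0 => Γ
  | n + 1 => insert (henkinAxiom (f n).1 (f n).2 (witness f n)) (henkinChain Γ n)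

variable {f}

theorem henkinChain_monotone (Γ : Set Fml) : Monotone (henkinChain f Γ) :=
  monotone_nat_of_le_succ fun _ => Set.subset_insert _ _

theorem index_lt_of_occurs_of_mem_henkinChain {Γ : Set Fml} (hΓ : ∀ φ ∈ Γ, InLang OldVar φ)
    {n : ℕ} {ψ : Fml} (hψ : ψ ∈ henkinChain f Γ n) {v : Var} (hv : ψ.occurs v) :
    v ∈ OldVar ∨ v.2 < 2 * witnessBound f n + 1 := by
  induction n generalizing ψ with
  | zero => exact Or.inl (hΓ ψ hψ v hv)
  | succ n ih =>
    have hmono := witnessBound_strictMono f (Nat.lt_add_one n)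
    rcases hψ with rfl | hψ
    · obtain ⟨hφ, hx⟩ := max_lt_iff.mp (max_lt_witnessBound f n)
      right
      rcases hv with hv | rfl | hv
      · rcases Fml.occurs_or_eq_of_occurs_substV hv with hv | rfl
        · have := (f n).1.le_varBound_of_occurs hv
          omega
        · simp only [witness]
          omega
      · omega
      · have := (f n).1.le_varBound_of_occurs hv
        omega
    · exact (ih hψ hv).imp_right fun h => by omega

theorem consistent_henkinChain {Λ Γ : Set Fml} (hΛ : PropClosed Λ)
    (gen : ∀ (φ ψ : Fml) (x : Var), ¬ φ.free x →
      Fml.imp φ ψ ∈ Λ → Fml.imp φ (Fml.all x ψ) ∈ Λ)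
    (alpha : ∀ (φ : Fml) (x y : Var), y.1 = x.1 → ¬ φ.occurs y →
      Fml.imp (Fml.all y (φ.substV x y)) (Fml.all x φ) ∈ Λ)
    (hΓ : ∀ φ ∈ Γ, InLang OldVar φ) (hcons : Consistent Λ Γ) (n : ℕ) :
    Consistent Λ (henkinChain f Γ n) := by
  induction n with
  | zero => exact hcons
  | succ n ih =>
    refine ih.insert_henkinAxiom hΛ gen alpha rfl (fun ψ hψ hocc => ?_) fun hocc => ?_
    · rcases index_lt_of_occurs_of_mem_henkinChain hΓ hψ hocc with h | h
      · simp [OldVar, witness] at h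
      · simp [witness] at h
    · have := (f n).1.le_varBound_of_occurs hocc
      have := (max_lt_iff.mp (max_lt_witnessBound f n)).1
      simp only [witness] at *
      omega

theorem forallProp_iUnion_henkinChain (hf : Function.Surjective f) (Γ : Set Fml) :
    ForallProp (⋃ n, henkinChain f Γ n) := by
  intro φ x
  obtain ⟨n, hn⟩ := hf (φ, x)
  refine ⟨witness f n, by simp [witness, hn], Set.mem_iUnion.mpr ⟨n + 1, ?_⟩⟩
  simp only [henkinChain, henkinAxiom, hn]
  exact Set.mem_insert _ _

end HenkinChain

/-- Saturation Lemma: every Λ-consistent set Γ of L-formulas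
extends to a Λ-consistent set Γ₊ of L⁺-formulas with the ∀-property.
Λ is assumed to contain all substitution instances of propositional
tautologies, to be closed under modus ponens and the rule Gen, and to contain
the alphabetic-variant implications ∀y φ(y/x) → ∀x φ for fresh y. -/
theorem saturation (Λ : Set Fml)
    (taut : ∀ φ, Taut φ → φ ∈ Λ)
    (mp : ∀ φ ψ : Fml, Fml.imp φ ψ ∈ Λ → φ ∈ Λ → ψ ∈ Λ)
    (gen : ∀ (φ ψ : Fml) (x : Var), ¬ φ.free x →
      Fml.imp φ ψ ∈ Λ → Fml.imp φ (Fml.all x ψ) ∈ Λ)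
    (alpha : ∀ (φ : Fml) (x y : Var), y.1 = x.1 → ¬ φ.occurs y →
      Fml.imp (Fml.all y (φ.substV x y)) (Fml.all x φ) ∈ Λ)
    (Γ : Set Fml) (hΓL : ∀ φ ∈ Γ, InLang OldVar φ)
    (hcons : Consistent Λ Γ) :
    ∃ Γp : Set Fml, Γ ⊆ Γp ∧ Consistent Λ Γp ∧ ForallProp Γp := by
  obtain ⟨f, hf⟩ := exists_surjective_nat (Fml × Var)
  refine ⟨⋃ n, henkinChain f Γ n, Set.subset_iUnion (henkinChain f Γ) 0, ?_,
    forallProp_iUnion_henkinChain hf Γ⟩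
  exact Consistent.iUnion (henkinChain_monotone Γ).directed_le
    (consistent_henkinChain ⟨taut, mp⟩ gen alpha hΓL hcons)
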